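/- For every integer I_0 ≥ 0 there exist real constants C_{I_{01}, I_{02}} (indexed by pairs of nonnegative integers with I_{01} + I_{02} = I_0) and C'_{Ĩ_{01}, Ĩ_{02}} (indexed by pairs of nonnegative integers with Ĩ_{01} + Ĩ_{02} ≤ I_0 - 1) such that for all smooth functions v, w : ℝ × ℝⁿ → ℝ one has ∂_t^{I_0} Q(v, w) = Σ_{I_{01} + I_{02} = I_0} C_{I_{01}, I_{02}} Q(∂_t^{I_{01}} v, ∂_t^{I_{02}} w) + e^{-t} Σ_{i=1}^n Σ_{Ĩ_{01} + Ĩ_{02} ≤ I_0 - 1} C'_{Ĩ_{01}, Ĩ_{02}} (∂_t^{Ĩ_{01}} ∂_{x_i} v)(∂_t^{Ĩ_{02}} ∂_{x_i} w) everywhere. -/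

import Mathlib

open Real MeasureTheory

/-- Time derivative ∂ₜ of a function on ℝ × ℝⁿ. -/
noncomputable def pT (n : ℕ) (φ : ℝ × (Fin n → ℝ) → ℝ) : ℝ × (Fin n → ℝ) → ℝ :=
  fun p => deriv (fun s => φ (s, p.2)) p.1

/-- Spatial derivative ∂ₓᵢ of a function on ℝ × ℝⁿ. -/
noncomputable def pX (n : ℕ) (i : Fin n) (φ : ℝ × (Fin n → ℝ) → ℝ) : ℝ × (Fin n → ℝ) → ℝ :=
  fun p => deriv (fun s => φ (p.1, Function.update p.2 i s)) (p.2 i)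

/-- Mixed spatial derivative D^I = ∂ₓ₁^{I₁} ⋯ ∂ₓₙ^{Iₙ}. -/
noncomputable def Dmix (n : ℕ) (I : Fin n → ℕ) (φ : ℝ × (Fin n → ℝ) → ℝ) : ℝ × (Fin n → ℝ) → ℝ :=
  (List.ofFn (fun i : Fin n => (pX n i)^[I i])).foldr (· ∘ ·) id φ

/-- The de Sitter wave operator □_g φ = -∂ₜ²φ - (n/2)∂ₜφ + e^{-t} Σᵢ ∂ₓᵢ²φ. -/
noncomputable def dBox (n : ℕ) (φ : ℝ × (Fin n → ℝ) → ℝ) : ℝ × (Fin n → ℝ) → ℝ :=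
  fun p => -(pT n (pT n φ) p) - ((n : ℝ) / 2) * pT n φ p
    + Real.exp (-p.1) * ∑ i : Fin n, pX n i (pX n i φ) p

/-- The de Sitter null form Q(φ,ψ) = -φₜψₜ + e^{-t} Σᵢ φᵢψᵢ. -/
noncomputable def nullQ (n : ℕ) (φ ψ : ℝ × (Fin n → ℝ) → ℝ) : ℝ × (Fin n → ℝ) → ℝ :=
  fun p => -(pT n φ p) * pT n ψ p + Real.exp (-p.1) * ∑ i : Fin n, pX n i φ p * pX n i ψ p

/-
Along every line `x = const` the operator `pT n` is the ordinary derivative in `t`, so the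
Leibniz rule applies to both products in `Q(v, w) = -vₜ wₜ + e^{-t} Σᵢ ∂ᵢv ∂ᵢw`, with
`∂ₜᵏ e^{-t} = (-1)ᵏ e^{-t}`. Since `∂ₜ` and `∂ₓᵢ` commute on smooth functions (Schwarz), the
top-order spatial terms recombine with the time part into `Σₐ (N choose a) Q(∂ₜᵃ v, ∂ₜ^{N-a} w)`;
the remaining ones give `C'_{a,b} = (-1)^{N-a-b} (N choose a+b) (a+b choose a)`.
-/

open Finset
open scoped ContDiff

theorem fderiv_fderiv_apply_comm {E F : Type*} [NormedAddCommGroup E] [NormedSpace ℝ E]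
    [NormedAddCommGroup F] [NormedSpace ℝ F] {f : E → F} (hf : ContDiff ℝ 2 f) (x u v : E) :
    fderiv ℝ (fun y => fderiv ℝ f y u) x v = fderiv ℝ (fun y => fderiv ℝ f y v) x u := by
  have hd : DifferentiableAt ℝ (fderiv ℝ f) x :=
    (hf.fderiv_right (m := 1) le_rfl).differentiable one_ne_zero x
  have hsymm := hf.contDiffAt.isSymmSndFDerivAt (x := x) (by simp) v u
  simpa [fderiv_clm_apply hd (differentiableAt_const _)] using hsymm

section DeSitter

variable {n : ℕ}

section Slices

theorem iterate_pT_apply (k : ℕ) (φ : ℝ × (Fin n → ℝ) → ℝ) (p : ℝ × (Fin n → ℝ)) :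
    (pT n)^[k] φ p = iteratedDeriv k (fun s => φ (s, p.2)) p.1 := by
  induction k generalizing φ with
  | zero => simp
  | succ k ih => rw [Function.iterate_succ_apply, ih, iteratedDeriv_succ']; rfl

variable {f g : ℝ × (Fin n → ℝ) → ℝ}

theorem contDiffAt_slice (hf : ContDiff ℝ ∞ f) (k : ℕ) (x : Fin n → ℝ) (t : ℝ) :
    ContDiffAt ℝ k (fun s => f (s, x)) t :=
  ((hf.comp (contDiff_id.prodMk contDiff_const)).of_le (mod_cast le_top)).contDiffAt

theorem iterate_pT_add (hf : ContDiff ℝ ∞ f) (hg : ContDiff ℝ ∞ g) (k : ℕ)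
    (p : ℝ × (Fin n → ℝ)) :
    (pT n)^[k] (fun q => f q + g q) p = (pT n)^[k] f p + (pT n)^[k] g p := by
  simp only [iterate_pT_apply]
  exact iteratedDeriv_fun_add (contDiffAt_slice hf k _ _) (contDiffAt_slice hg k _ _)

theorem iterate_pT_neg (f : ℝ × (Fin n → ℝ) → ℝ) (k : ℕ) (p : ℝ × (Fin n → ℝ)) :
    (pT n)^[k] (fun q => -f q) p = -(pT n)^[k] f p := by
  simp only [iterate_pT_apply]
  exact iteratedDeriv_fun_neg k _ _

theorem iterate_pT_sum {ι : Type*} (s : Finset ι) {f : ι → ℝ × (Fin n → ℝ) → ℝ}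
    (hf : ∀ i ∈ s, ContDiff ℝ ∞ (f i)) (k : ℕ) (p : ℝ × (Fin n → ℝ)) :
    (pT n)^[k] (fun q => ∑ i ∈ s, f i q) p = ∑ i ∈ s, (pT n)^[k] (f i) p := by
  simp only [iterate_pT_apply]
  exact iteratedDeriv_fun_sum fun i hi => contDiffAt_slice (hf i hi) k _ _

theorem iterate_pT_mul (hf : ContDiff ℝ ∞ f) (hg : ContDiff ℝ ∞ g) (k : ℕ)
    (p : ℝ × (Fin n → ℝ)) :
    (pT n)^[k] (fun q => f q * g q) p
      = ∑ a ∈ range (k + 1), k.choose a * (pT n)^[a] f p * (pT n)^[k - a] g p := by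
  simp only [iterate_pT_apply]
  exact iteratedDeriv_fun_mul (contDiffAt_slice hf k _ _) (contDiffAt_slice hg k _ _)

theorem iterate_pT_exp_neg (k : ℕ) (p : ℝ × (Fin n → ℝ)) :
    (pT n)^[k] (fun q => exp (-q.1)) p = (-1) ^ k * exp (-p.1) := by
  rw [iterate_pT_apply]
  simpa using congrFun (iteratedDeriv_exp_const_mul k (-1)) p.1

end Slices

section Commute

variable {φ : ℝ × (Fin n → ℝ) → ℝ}

theorem pT_eq_fderiv {p : ℝ × (Fin n → ℝ)} (hφ : DifferentiableAt ℝ φ p) :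
    pT n φ p = fderiv ℝ φ p (1, 0) := by
  have hγ : HasDerivAt (fun s : ℝ => (s, p.2)) ((1 : ℝ), (0 : Fin n → ℝ)) p.1 :=
    (hasDerivAt_id p.1).prodMk (hasDerivAt_const p.1 p.2)
  exact (hφ.hasFDerivAt.comp_hasDerivAt p.1 hγ).deriv

theorem pX_eq_fderiv (i : Fin n) {p : ℝ × (Fin n → ℝ)} (hφ : DifferentiableAt ℝ φ p) :
    pX n i φ p = fderiv ℝ φ p (0, Pi.single i 1) := by
  have hγ : HasDerivAt (fun s : ℝ => (p.1, Function.update p.2 i s))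
      ((0 : ℝ), Pi.single i (1 : ℝ)) (p.2 i) :=
    (hasDerivAt_const (p.2 i) p.1).prodMk (hasDerivAt_update p.2 i (p.2 i))
  have hφ' : DifferentiableAt ℝ φ (p.1, Function.update p.2 i (p.2 i)) := by simpa using hφ
  simpa [pX, Function.comp_def] using (hφ'.hasFDerivAt.comp_hasDerivAt (p.2 i) hγ).deriv

variable (hφ : ContDiff ℝ ∞ φ)
include hφ

theorem pT_eq_fun_fderiv : pT n φ = fun p => fderiv ℝ φ p (1, 0) :=
  funext fun p => pT_eq_fderiv (hφ.differentiable (by simp) p)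

theorem pX_eq_fun_fderiv (i : Fin n) : pX n i φ = fun p => fderiv ℝ φ p (0, Pi.single i 1) :=
  funext fun p => pX_eq_fderiv i (hφ.differentiable (by simp) p)

theorem contDiff_pT : ContDiff ℝ ∞ (pT n φ) := by
  rw [pT_eq_fun_fderiv hφ]
  exact (hφ.fderiv_right (mod_cast le_top)).clm_apply contDiff_const

theorem contDiff_pX (i : Fin n) : ContDiff ℝ ∞ (pX n i φ) := by
  rw [pX_eq_fun_fderiv hφ]
  exact (hφ.fderiv_right (mod_cast le_top)).clm_apply contDiff_const

theorem contDiff_iterate_pT (k : ℕ) : ContDiff ℝ ∞ ((pT n)^[k] φ) := by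
  induction k with
  | zero => exact hφ
  | succ k ih => rw [Function.iterate_succ_apply']; exact contDiff_pT ih

theorem pT_pX_comm (i : Fin n) : pT n (pX n i φ) = pX n i (pT n φ) := by
  rw [pT_eq_fun_fderiv (contDiff_pX hφ i), pX_eq_fun_fderiv (contDiff_pT hφ),
    pX_eq_fun_fderiv hφ, pT_eq_fun_fderiv hφ]
  exact funext fun p => fderiv_fderiv_apply_comm (hφ.of_le ENat.LEInfty.out) p _ _

theorem iterate_pT_pX_comm (i : Fin n) (k : ℕ) :
    (pT n)^[k] (pX n i φ) = pX n i ((pT n)^[k] φ) := by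
  induction k with
  | zero => rfl
  | succ k ih =>
    rw [Function.iterate_succ_apply', Function.iterate_succ_apply', ih,
      pT_pX_comm (contDiff_iterate_pT hφ k)]

end Commute

section NullForm

variable {v w : ℝ × (Fin n → ℝ) → ℝ}

theorem contDiff_exp_neg_fst : ContDiff ℝ ∞ (fun q : ℝ × (Fin n → ℝ) => exp (-q.1)) := by
  fun_prop

theorem iterate_pT_exp_neg_mul {g : ℝ × (Fin n → ℝ) → ℝ} (hg : ContDiff ℝ ∞ g) (k : ℕ)
    (p : ℝ × (Fin n → ℝ)) :
    (pT n)^[k] (fun q => exp (-q.1) * g q) p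
      = exp (-p.1) * ∑ j ∈ range (k + 1), (-1) ^ (k - j) * k.choose j * (pT n)^[j] g p := by
  simp only [mul_comm (exp _)]
  rw [iterate_pT_mul hg contDiff_exp_neg_fst, sum_mul]
  simp only [iterate_pT_exp_neg]
  exact sum_congr rfl fun j _ => by ring

theorem iterate_pT_sum_pX_mul_pX (hv : ContDiff ℝ ∞ v) (hw : ContDiff ℝ ∞ w) (k : ℕ)
    (p : ℝ × (Fin n → ℝ)) :
    (pT n)^[k] (fun q => ∑ i, pX n i v q * pX n i w q) p
      = ∑ a ∈ range (k + 1), k.choose a *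
          ∑ i, (pT n)^[a] (pX n i v) p * (pT n)^[k - a] (pX n i w) p := by
  rw [iterate_pT_sum _ fun i _ => (contDiff_pX hv i).mul (contDiff_pX hw i)]
  simp only [iterate_pT_mul (contDiff_pX hv _) (contDiff_pX hw _), mul_sum, mul_assoc]
  exact sum_comm

theorem iterate_pT_nullQ (hv : ContDiff ℝ ∞ v) (hw : ContDiff ℝ ∞ w) (N : ℕ)
    (p : ℝ × (Fin n → ℝ)) :
    (pT n)^[N] (nullQ n v w) p
      = ∑ a ∈ range (N + 1), N.choose a * nullQ n ((pT n)^[a] v) ((pT n)^[N - a] w) p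
        + exp (-p.1) * ∑ j ∈ range N, (-1) ^ (N - j) * N.choose j *
            ∑ a ∈ range (j + 1), j.choose a *
              ∑ i, (pT n)^[a] (pX n i v) p * (pT n)^[j - a] (pX n i w) p := by
  have hsplit : nullQ n v w = fun q => -(pT n v q * pT n w q)
      + exp (-q.1) * ∑ i, pX n i v q * pX n i w q := by
    funext q
    simp only [nullQ, neg_mul]
  have hspatial : ContDiff ℝ ∞ (fun q => ∑ i, pX n i v q * pX n i w q) :=
    ContDiff.sum fun i _ => (contDiff_pX hv i).mul (contDiff_pX hw i)
  rw [hsplit, iterate_pT_add ((contDiff_pT hv).mul (contDiff_pT hw)).neg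
      (contDiff_exp_neg_fst.mul hspatial), iterate_pT_neg, iterate_pT_exp_neg_mul hspatial,
    sum_range_succ, iterate_pT_mul (contDiff_pT hv) (contDiff_pT hw)]
  -- The split-off `j = N` term is the spatial part of the `nullQ` terms on the right, once
  -- `∂ₜᵃ` is moved past `∂ₓᵢ`.
  simp only [iterate_pT_sum_pX_mul_pX hv hw, nullQ, ← iterate_pT_pX_comm hv,
    ← iterate_pT_pX_comm hw, ← Function.iterate_succ_apply' (pT n), Function.iterate_succ_apply]
  simp only [Nat.sub_self, pow_zero, Nat.choose_self, Nat.cast_one, one_mul, mul_add,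
    sum_add_distrib, neg_mul, mul_neg, sum_neg_distrib, mul_assoc, mul_sum,
    mul_left_comm (exp (-p.1))]
  ring

end NullForm

end DeSitter

theorem stmt14_general (n : ℕ) (I0 : ℕ) :
    ∃ C C' : ℕ → ℕ → ℝ,
      ∀ v w : ℝ × (Fin n → ℝ) → ℝ, ContDiff ℝ (⊤ : ℕ∞) v → ContDiff ℝ (⊤ : ℕ∞) w →
        ∀ p : ℝ × (Fin n → ℝ),
          (pT n)^[I0] (nullQ n v w) p
            = (∑ a ∈ Finset.range (I0 + 1),
                  C a (I0 - a) * nullQ n ((pT n)^[a] v) ((pT n)^[I0 - a] w) p)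
              + Real.exp (-p.1) *
                  ∑ i : Fin n, ∑ a ∈ Finset.range I0, ∑ b ∈ Finset.range (I0 - a),
                    C' a b * (pT n)^[a] (pX n i v) p * (pT n)^[b] (pX n i w) p := by
  set C' : ℕ → ℕ → ℝ := fun a b => (-1) ^ (I0 - (a + b)) * I0.choose (a + b) * (a + b).choose a
  refine ⟨fun a _ => I0.choose a, C', fun v w hv hw p => ?_⟩
  rw [iterate_pT_nullQ hv hw]
  congr 2
  set F : ℕ → ℕ → ℝ := fun a b => ∑ i, C' a b * (pT n)^[a] (pX n i v) p * (pT n)^[b] (pX n i w) p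
  calc _ = ∑ j ∈ range I0, ∑ a ∈ range (j + 1), F a (j - a) := by
        refine sum_congr rfl fun j _ => ?_
        rw [mul_sum]
        refine sum_congr rfl fun a ha => ?_
        have hC : C' a (j - a) = (-1) ^ (I0 - j) * I0.choose j * j.choose a := by
          simp only [C', Nat.add_sub_cancel' (mem_range_succ_iff.mp ha)]
        simp only [F, hC, mul_sum]
        exact sum_congr rfl fun i _ => by ring
    _ = ∑ a ∈ range I0, ∑ b ∈ range (I0 - a), F a b := sum_range_diag_flip I0 F
    _ = _ := by
        rw [sum_comm]
        exact sum_congr rfl fun a _ => sum_comm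

/-- Higher time derivatives of the de Sitter null form:
`∂ₜ^{I₀}Q(v,w) = Σ_{I₀₁+I₀₂=I₀} C Q(∂ₜ^{I₀₁}v, ∂ₜ^{I₀₂}w)
 + e^{-t} Σᵢ Σ_{Ĩ₀₁+Ĩ₀₂≤I₀-1} C' (∂ₜ^{Ĩ₀₁}∂ₓᵢv)(∂ₜ^{Ĩ₀₂}∂ₓᵢw)`. -/
theorem stmt14 (n : ℕ) (hn : 1 ≤ n) (I0 : ℕ) :
    ∃ C C' : ℕ → ℕ → ℝ,
      ∀ v w : ℝ × (Fin n → ℝ) → ℝ, ContDiff ℝ (⊤ : ℕ∞) v → ContDiff ℝ (⊤ : ℕ∞) w →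
        ∀ p : ℝ × (Fin n → ℝ),
          (pT n)^[I0] (nullQ n v w) p
            = (∑ a ∈ Finset.range (I0 + 1),
                  C a (I0 - a) * nullQ n ((pT n)^[a] v) ((pT n)^[I0 - a] w) p)
              + Real.exp (-p.1) *
                  ∑ i : Fin n, ∑ a ∈ Finset.range I0, ∑ b ∈ Finset.range (I0 - a),
                    C' a b * (pT n)^[a] (pX n i v) p * (pT n)^[b] (pX n i w) p :=
  stmt14_general n I0
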